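/- arXiv:1409.4435 — 7 statements merged into one kernel-verified Lean document; each statement's English description precedes it below -/
import Mathlib

section
/- Let (a_k)_{k≥1} be a monotone null sequence of real numbers, and let (b_k)_{k≥1} be its center coefficients. Then for every complex number v with |v| = 1 the series C_v = ∑_{k=1}^∞ b_k v^k converges absolutely, and for every such v with v ≠ 1 the series S_v = ∑_{k=1}^∞ a_k v^k converges and satisfies S_v = C_v/(v − 1). -/
/-!
Summation by parts gives `(v - 1) ∑_{k ≤ N} a_k v^k = ∑_{k ≤ N} b_k v^k + a_N v^{N+1}`.
On the unit circle `|b_k v^k| = |b_k|`, and for `k ≥ 2` these are the nonnegative differences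
`a_{k-1} - a_k`, which telescope to at most `a_1`; so the center series converges absolutely.
Since `a_N v^{N+1} → 0`, dividing by `v - 1 ≠ 0` gives the limit of the partial sums of `S_v`.
-/

open Filter Topology Finset

theorem hasSum_sub_succ_of_antitone {f : ℕ → ℝ} (hf : Antitone f) {l : ℝ}
    (hl : Tendsto f atTop (𝓝 l)) : HasSum (fun n => f n - f (n + 1)) (f 0 - l) := by
  rw [hasSum_iff_tendsto_nat_of_nonneg fun n => sub_nonneg.2 (hf n.le_succ)]
  simp_rw [sum_range_sub']
  exact tendsto_const_nhds.sub hl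

theorem sub_one_mul_sum_range_eq_of_center {R : Type*} [CommRing R] {a b : ℕ → R}
    (hb1 : b 1 = -a 1) (hbk : ∀ k, 1 ≤ k → b (k + 1) = a k - a (k + 1)) (v : R) {N : ℕ}
    (hN : 1 ≤ N) :
    (v - 1) * ∑ k ∈ range N, a (k + 1) * v ^ (k + 1) =
      ∑ k ∈ range N, b (k + 1) * v ^ (k + 1) + a N * v ^ (N + 1) := by
  induction N, hN using Nat.le_induction with
  | base => simp only [range_one, sum_singleton, hb1]; ring
  | succ n hn ih => rw [sum_range_succ, sum_range_succ, mul_add, ih, hbk n hn]; ring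

theorem summable_abs_of_center {a b : ℕ → ℝ} (ha_mono : ∀ k, 1 ≤ k → a (k + 1) ≤ a k)
    (ha_lim : Tendsto a atTop (𝓝 0)) (hbk : ∀ k, 1 ≤ k → b (k + 1) = a k - a (k + 1)) :
    Summable fun k => |b (k + 1)| := by
  have hanti : Antitone fun k => a (k + 1) :=
    antitone_nat_of_succ_le fun k => ha_mono (k + 1) le_add_self
  rw [← summable_nat_add_iff 1]
  refine (hasSum_sub_succ_of_antitone hanti ((tendsto_add_atTop_iff_nat 1).2 ha_lim)).summable.congr
    fun k => ?_
  rw [hbk (k + 1) le_add_self, abs_of_nonneg (sub_nonneg.2 (hanti k.le_succ))]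

theorem norm_ofReal_mul_pow_of_norm_eq_one (c : ℝ) {v : ℂ} (hv : ‖v‖ = 1) (n : ℕ) :
    ‖(c : ℂ) * v ^ n‖ = |c| := by
  simp [hv]

theorem stmt_4_general (a b : ℕ → ℝ)
    (ha_mono : ∀ k, 1 ≤ k → a (k + 1) ≤ a k)
    (ha_lim : Filter.Tendsto a Filter.atTop (nhds 0))
    (hb1 : b 1 = -a 1)
    (hbk : ∀ k, 2 ≤ k → b k = a (k - 1) - a k) :
    (∀ v : ℂ, ‖v‖ = 1 →
      Summable (fun k : ℕ => ‖(b (k + 1) : ℂ) * v ^ (k + 1)‖)) ∧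
    (∀ v : ℂ, ‖v‖ = 1 → v ≠ 1 →
      Filter.Tendsto
        (fun N : ℕ => ∑ k ∈ Finset.range N, (a (k + 1) : ℂ) * v ^ (k + 1))
        Filter.atTop
        (nhds ((∑' k : ℕ, (b (k + 1) : ℂ) * v ^ (k + 1)) / (v - 1)))) := by
  have hbk' (k : ℕ) (hk : 1 ≤ k) : b (k + 1) = a k - a (k + 1) := by
    simpa using hbk (k + 1) (by omega)
  have hC (v : ℂ) (hv : ‖v‖ = 1) :
      Summable fun k : ℕ => ‖(b (k + 1) : ℂ) * v ^ (k + 1)‖ := by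
    simpa only [norm_ofReal_mul_pow_of_norm_eq_one _ hv] using
      summable_abs_of_center ha_mono ha_lim hbk'
  refine ⟨hC, fun v hv hv1 => ?_⟩
  have htail : Tendsto (fun N : ℕ => (a N : ℂ) * v ^ (N + 1)) atTop (𝓝 0) := by
    rw [tendsto_zero_iff_norm_tendsto_zero]
    simpa only [norm_ofReal_mul_pow_of_norm_eq_one _ hv, abs_zero] using ha_lim.abs
  have hlim := ((hC v hv).of_norm.hasSum.tendsto_sum_nat.add htail).div_const (v - 1)
  rw [add_zero] at hlim
  refine hlim.congr' ?_
  filter_upwards [eventually_ge_atTop 1] with N hN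
  rw [div_eq_iff (sub_ne_zero.2 hv1), mul_comm (_ : ℂ) (v - 1),
    sub_one_mul_sum_range_eq_of_center (a := fun k => (a k : ℂ))
      (b := fun k => (b k : ℂ)) (by simp [hb1])
      (fun k hk => by simp [hbk' k hk]) v hN]

/-- For a monotone null sequence `(a_k)_{k≥1}` with center coefficients
`(b_k)`, the center series `C_v = ∑_{k≥1} b_k v^k` converges absolutely for
every `v` on the unit circle, and for `v ≠ 1` on the unit circle the series
`S_v = ∑_{k≥1} a_k v^k` converges, with `S_v = C_v / (v - 1)`. -/
theorem stmt_4 (a b : ℕ → ℝ)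
    (ha_pos : ∀ k, 1 ≤ k → 0 < a k)
    (ha_mono : ∀ k, 1 ≤ k → a (k + 1) ≤ a k)
    (ha_lim : Filter.Tendsto a Filter.atTop (nhds 0))
    (hb1 : b 1 = -a 1)
    (hbk : ∀ k, 2 ≤ k → b k = a (k - 1) - a k) :
    (∀ v : ℂ, ‖v‖ = 1 →
      Summable (fun k : ℕ => ‖(b (k + 1) : ℂ) * v ^ (k + 1)‖)) ∧
    (∀ v : ℂ, ‖v‖ = 1 → v ≠ 1 →
      Filter.Tendsto
        (fun N : ℕ => ∑ k ∈ Finset.range N, (a (k + 1) : ℂ) * v ^ (k + 1))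
        Filter.atTop
        (nhds ((∑' k : ℕ, (b (k + 1) : ℂ) * v ^ (k + 1)) / (v - 1)))) :=
  stmt_4_general a b ha_mono ha_lim hb1 hbk
end

section
/- For every complex number z with |z| < 1, the identity (z + 1) · ∑_{k=1}^∞ ((−1)^k / k) z^k = −z + ∑_{k=1}^∞ ((−1)^k / (k(k+1))) z^{k+1} holds, where the series on the right-hand side converges absolutely for all |z| ≤ 1. -/
/-!
Multiplying `∑ a_k z^(k+1)` by `z + 1` and collecting equal powers of `z` gives
`a₀ z + ∑ (a_k + a_(k+1)) z^(k+2)`. For `a_k = (-1)^(k+1)/(k+1)` consecutive coefficients nearly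
cancel, `a_k + a_(k+1) = (-1)^(k+1)/((k+1)(k+2))`, and these are dominated by `1/(k+1)²`.
-/

theorem add_one_mul_tsum_mul_pow_succ {R : Type*} [CommRing R] [TopologicalSpace R]
    [IsTopologicalRing R] [T2Space R] {a : ℕ → R} {z : R}
    (h : Summable fun k => a k * z ^ (k + 1)) :
    (z + 1) * ∑' k, a k * z ^ (k + 1) = a 0 * z + ∑' k, (a k + a (k + 1)) * z ^ (k + 2) := by
  have hshift : Summable fun k => a (k + 1) * z ^ (k + 2) := (summable_nat_add_iff 1).mpr h
  calc (z + 1) * ∑' k, a k * z ^ (k + 1)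
      = a 0 * z + (z * ∑' k, a k * z ^ (k + 1) + ∑' k, a (k + 1) * z ^ (k + 2)) := by
        rw [h.tsum_eq_zero_add]; ring
    _ = a 0 * z + ∑' k, (a k + a (k + 1)) * z ^ (k + 2) := by
        rw [← h.tsum_mul_left, ← (h.mul_left z).tsum_add hshift]
        congr 1; exact tsum_congr fun k => by ring

theorem summable_mul_pow_succ_of_norm_le_one {𝕜 : Type*} [NormedDivisionRing 𝕜]
    [CompleteSpace 𝕜] {a : ℕ → 𝕜} (ha : ∀ k, ‖a k‖ ≤ 1) {z : 𝕜} (hz : ‖z‖ < 1) :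
    Summable fun k => a k * z ^ (k + 1) := by
  have hgeom := (summable_geometric_of_lt_one (norm_nonneg z) hz).mul_right ‖z‖
  refine Summable.of_norm_bounded hgeom fun k => ?_
  rw [norm_mul, norm_pow, pow_succ]
  exact mul_le_of_le_one_left (by positivity) (ha k)

theorem summable_norm_mul_pow_of_norm_le_one {𝕜 : Type*} [NormedDivisionRing 𝕜]
    {a : ℕ → 𝕜} (ha : Summable fun k => ‖a k‖) {z : 𝕜} (hz : ‖z‖ ≤ 1) (n : ℕ → ℕ) :
    Summable fun k => ‖a k * z ^ n k‖ :=
  ha.of_nonneg_of_le (fun _ => norm_nonneg _) fun k => by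
    rw [norm_mul, norm_pow]
    exact mul_le_of_le_one_right (norm_nonneg _) (pow_le_one₀ (norm_nonneg z) hz)

theorem neg_one_pow_div_add_neg_one_pow_div {K : Type*} [Field K] [CharZero K] (k : ℕ) :
    (-1 : K) ^ (k + 1) / ((k : K) + 1) + (-1) ^ (k + 1 + 1) / (((k + 1 : ℕ) : K) + 1) =
      (-1) ^ (k + 1) / (((k : K) + 1) * ((k : K) + 2)) := by
  have h1 : (k : K) + 1 ≠ 0 := by exact_mod_cast k.succ_ne_zero
  have h2 : (k : K) + 1 + 1 ≠ 0 := by exact_mod_cast (k + 1).succ_ne_zero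
  push_cast
  rw [show (k : K) + 2 = k + 1 + 1 by ring]
  field_simp
  ring

theorem norm_neg_one_pow_div_natCast_add_one_le_one (k : ℕ) :
    ‖(-1 : ℂ) ^ (k + 1) / ((k : ℂ) + 1)‖ ≤ 1 := by
  rw [norm_div, norm_pow, norm_neg, norm_one, one_pow, ← Nat.cast_succ, Complex.norm_natCast]
  exact div_le_one_of_le₀ (by exact_mod_cast k.succ_pos) (Nat.cast_nonneg _)

theorem summable_inv_natCast_add_one_mul_add_two :
    Summable fun k : ℕ => ‖(((k : ℂ) + 1) * ((k : ℂ) + 2))⁻¹‖ := by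
  have hsq : Summable fun k : ℕ => (((k : ℝ) + 1) ^ 2)⁻¹ := by
    simpa using (summable_nat_add_iff 1).mpr (Real.summable_nat_pow_inv.mpr one_lt_two)
  refine hsq.of_nonneg_of_le (fun _ => norm_nonneg _) fun k => ?_
  rw [show ((k : ℂ) + 1) * ((k : ℂ) + 2) = (((k + 1) * (k + 2) : ℝ) : ℂ) by push_cast; ring,
    norm_inv, Complex.norm_of_nonneg (by positivity)]
  gcongr; linarith

/-- Center series of the one-cycle sawtooth wave: for `|z| < 1`,
`(z + 1) · ∑_{k≥1} ((-1)^k / k) z^k = -z + ∑_{k≥1} ((-1)^k / (k(k+1))) z^{k+1}`,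
where the right-hand series converges absolutely for all `|z| ≤ 1`. -/
theorem stmt_13 :
    (∀ z : ℂ, ‖z‖ < 1 →
      (z + 1) * ∑' k : ℕ, ((-1 : ℂ) ^ (k + 1) / ((k : ℂ) + 1)) * z ^ (k + 1) =
        -z + ∑' k : ℕ,
          ((-1 : ℂ) ^ (k + 1) / (((k : ℂ) + 1) * ((k : ℂ) + 2))) * z ^ (k + 2)) ∧
    (∀ z : ℂ, ‖z‖ ≤ 1 →
      Summable (fun k : ℕ =>
        ‖((-1 : ℂ) ^ (k + 1) / (((k : ℂ) + 1) * ((k : ℂ) + 2))) * z ^ (k + 2)‖)) := by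
  constructor
  · intro z hz
    rw [add_one_mul_tsum_mul_pow_succ
      (summable_mul_pow_succ_of_norm_le_one norm_neg_one_pow_div_natCast_add_one_le_one hz)]
    simp only [neg_one_pow_div_add_neg_one_pow_div]
    norm_num
  · intro z hz
    refine summable_norm_mul_pow_of_norm_le_one ?_ hz (· + 2)
    simpa [div_eq_mul_inv] using summable_inv_natCast_add_one_mul_add_two
end

section
/- For every complex number z with |z| < 1, the identity (z² − 1) · ∑_{j=0}^∞ z^{2j+1}/(2j+1) = −z + ∑_{j=1}^∞ (2/(4j² − 1)) z^{2j+1} holds, where the series on the right-hand side converges absolutely for all |z| ≤ 1. -/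
/-! Write `f j = z^{2j+1}/(2j+1)`. Shifting the index, `(z² - 1) ∑ f = -f 0 + ∑ (z² f j - f (j+1))`,
and `z² f j - f (j+1) = (1/(2j+1) - 1/(2j+3)) z^{2j+3} = 2/(4(j+1)² - 1) z^{2j+3}`.
These coefficients are `O(1/j²)`, which gives absolute convergence on the closed disc. -/

theorem HasSum.mul_sub_succ {R : Type*} [Ring R] [TopologicalSpace R] [IsTopologicalRing R]
    {f : ℕ → R} {s : R} (hf : HasSum f s) (w : R) :
    HasSum (fun j => w * f j - f (j + 1)) ((w - 1) * s + f 0) := by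
  have hshift : HasSum (fun j => f (j + 1)) (s - f 0) := by
    simpa using (hasSum_nat_add_iff' 1).mpr hf
  rw [show (w - 1) * s + f 0 = w * s - (s - f 0) by noncomm_ring]
  exact (hf.mul_left w).sub hshift

theorem one_div_two_mul_add_one_sub {K : Type*} [Field K] [CharZero K] (j : ℕ) :
    1 / (2 * (j : K) + 1) - 1 / (2 * ((j + 1 : ℕ) : K) + 1) = 2 / (4 * ((j : K) + 1) ^ 2 - 1) := by
  have h₁ : (2 * (j : K) + 1) ≠ 0 := by exact_mod_cast (2 * j).succ_ne_zero
  have h₂ : (2 * (j : K) + 3) ≠ 0 := by exact_mod_cast (2 * j + 2).succ_ne_zero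
  push_cast
  rw [show 2 * ((j : K) + 1) + 1 = 2 * j + 3 by ring,
    show 4 * ((j : K) + 1) ^ 2 - 1 = (2 * j + 1) * (2 * j + 3) by ring]
  field_simp
  ring

theorem summable_pow_two_mul_add_one_div {z : ℂ} (hz : ‖z‖ < 1) :
    Summable fun j : ℕ => z ^ (2 * j + 1) / (2 * (j : ℂ) + 1) := by
  refine Summable.of_norm_bounded (summable_geometric_of_lt_one (norm_nonneg z) hz) fun j => ?_
  have hden : 1 ≤ ‖2 * (j : ℂ) + 1‖ := by
    rw [show 2 * (j : ℂ) + 1 = ((2 * j + 1 : ℕ) : ℂ) by push_cast; ring, Complex.norm_natCast]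
    exact_mod_cast Nat.le_add_left 1 (2 * j)
  calc ‖z ^ (2 * j + 1) / (2 * (j : ℂ) + 1)‖ ≤ ‖z‖ ^ (2 * j + 1) := by
        rw [norm_div, norm_pow]
        exact div_le_self (by positivity) hden
    _ ≤ ‖z‖ ^ j := pow_le_pow_of_le_one (norm_nonneg z) hz.le (by omega)

theorem four_mul_sq_sub_one_pos (j : ℕ) : (0 : ℝ) < 4 * ((j : ℝ) + 1) ^ 2 - 1 := by
  nlinarith [(j.cast_nonneg : (0 : ℝ) ≤ j)]

theorem summable_two_div_four_mul_sq_sub_one :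
    Summable fun j : ℕ => (2 : ℝ) / (4 * ((j : ℝ) + 1) ^ 2 - 1) := by
  have hmaj : Summable fun j : ℕ => (1 : ℝ) / ((j + 1 : ℕ) : ℝ) ^ 2 :=
    (summable_nat_add_iff 1).mpr (Real.summable_one_div_nat_pow.mpr one_lt_two)
  refine hmaj.of_nonneg_of_le (fun j => ?_) (fun j => ?_)
  · exact (div_pos two_pos (four_mul_sq_sub_one_pos j)).le
  · push_cast
    rw [div_le_div_iff₀ (four_mul_sq_sub_one_pos j) (by positivity)]
    nlinarith [(j.cast_nonneg : (0 : ℝ) ≤ j)]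

theorem summable_norm_mul_pow_of_summable_norm {𝕜 : Type*} [NormedDivisionRing 𝕜] {c : ℕ → 𝕜}
    (hc : Summable fun j => ‖c j‖) {z : 𝕜} (hz : ‖z‖ ≤ 1) (n : ℕ → ℕ) :
    Summable fun j => ‖c j * z ^ n j‖ :=
  hc.of_nonneg_of_le (fun _ => norm_nonneg _) fun j => by
    rw [norm_mul, norm_pow]
    exact mul_le_of_le_one_right (norm_nonneg _) (pow_le_one₀ (norm_nonneg z) hz)

/-- Center series of the square wave: for `|z| < 1`,
`(z² - 1) · ∑_{j≥0} z^{2j+1}/(2j+1) = -z + ∑_{j≥1} (2/(4j² - 1)) z^{2j+1}`,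
where the right-hand series converges absolutely for all `|z| ≤ 1`. -/
theorem stmt_14 :
    (∀ z : ℂ, ‖z‖ < 1 →
      (z ^ 2 - 1) * ∑' j : ℕ, z ^ (2 * j + 1) / (2 * (j : ℂ) + 1) =
        -z + ∑' j : ℕ,
          (2 / (4 * ((j : ℂ) + 1) ^ 2 - 1)) * z ^ (2 * (j + 1) + 1)) ∧
    (∀ z : ℂ, ‖z‖ ≤ 1 →
      Summable (fun j : ℕ =>
        ‖(2 / (4 * ((j : ℂ) + 1) ^ 2 - 1)) * z ^ (2 * (j + 1) + 1)‖)) := by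
  constructor
  · intro z hz
    have hsum := ((summable_pow_two_mul_add_one_div hz).hasSum).mul_sub_succ (z ^ 2)
    have hterm : ∀ j : ℕ, z ^ 2 * (z ^ (2 * j + 1) / (2 * (j : ℂ) + 1)) -
        z ^ (2 * (j + 1) + 1) / (2 * ((j + 1 : ℕ) : ℂ) + 1) =
          2 / (4 * ((j : ℂ) + 1) ^ 2 - 1) * z ^ (2 * (j + 1) + 1) := fun j => by
      rw [← one_div_two_mul_add_one_sub j, sub_mul]
      ring
    simp only [hterm] at hsum
    rw [hsum.tsum_eq]
    simp
  · intro z hz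
    refine summable_norm_mul_pow_of_summable_norm ?_ hz _
    refine summable_two_div_four_mul_sq_sub_one.congr fun j => ?_
    rw [show (2 / (4 * ((j : ℂ) + 1) ^ 2 - 1)) = ((2 / (4 * ((j : ℝ) + 1) ^ 2 - 1) : ℝ) : ℂ) by
      push_cast; rfl, Complex.norm_real, Real.norm_of_nonneg]
    exact (div_pos two_pos (four_mul_sq_sub_one_pos j)).le
end

section
/- For every complex number z with |z| < 1, the identity (z² − 1) · ∑_{j=1}^∞ z^{2j}/(2j) = −z²/2 + (1/2) ∑_{j=1}^∞ z^{2j+2}/(j(j+1)) holds, where the series on the right-hand side converges absolutely for all |z| ≤ 1. -/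
/-! Writing `w = z²` and `c j = 1 / (2 (j + 1))`, multiplying `∑ w^(j+1) c j` by `w - 1` and
shifting the index of the `-1` part by one leaves `-w c 0 + ∑ w^(j+2) (c j - c (j + 1))`; here
`c j - c (j + 1) = 1 / (2 (j + 1) (j + 2))`, and these coefficients are summable by comparison
with `∑ 1 / (j + 1)²`. -/

theorem mul_sub_one_tsum_pow_succ_mul {R : Type*} [Ring R] [TopologicalSpace R]
    [IsTopologicalRing R] [T2Space R] {w : R} {c : ℕ → R}
    (h : Summable fun j => w ^ (j + 1) * c j) :
    (w - 1) * ∑' j, w ^ (j + 1) * c j = -(w * c 0) + ∑' j, w ^ (j + 2) * (c j - c (j + 1)) := by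
  have hshift : Summable fun j => w ^ (j + 2) * c (j + 1) := (summable_nat_add_iff 1).mpr h
  have hmul : Summable fun j => w ^ (j + 2) * c j := by
    simpa only [pow_succ', mul_assoc] using h.mul_left w
  have hsplit : ∑' j, w ^ (j + 2) * (c j - c (j + 1)) =
      ∑' j, w ^ (j + 2) * c j - ∑' j, w ^ (j + 2) * c (j + 1) := by
    simp_rw [mul_sub]; exact hmul.tsum_sub hshift
  rw [hsplit, sub_mul, one_mul, ← h.tsum_mul_left, h.tsum_eq_zero_add]
  simp only [← mul_assoc, ← pow_succ', zero_add, pow_one]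
  abel

theorem summable_pow_succ_mul_of_norm_lt_one {R : Type*} [NormedDivisionRing R] [CompleteSpace R]
    {w : R} (hw : ‖w‖ < 1) {c : ℕ → R} (hc : ∀ j, ‖c j‖ ≤ 1) : Summable fun j => w ^ (j + 1) * c j := by
  refine Summable.of_norm_bounded ((summable_nat_add_iff 1).mpr
    (summable_geometric_of_lt_one (norm_nonneg w) hw)) fun j => ?_
  rw [norm_mul, norm_pow]
  exact mul_le_of_le_one_right (by positivity) (hc j)

theorem summable_norm_pow_div_succ_mul_succ_succ {z : ℂ} (hz : ‖z‖ ≤ 1) (e : ℕ → ℕ) :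
    Summable fun j : ℕ => ‖z ^ e j / (((j : ℂ) + 1) * ((j : ℂ) + 2))‖ := by
  have hsq : Summable fun j : ℕ => 1 / ((j : ℝ) + 1) ^ 2 := by
    simpa only [Nat.cast_add, Nat.cast_one] using
      (summable_nat_add_iff 1).mpr (Real.summable_one_div_nat_pow.mpr one_lt_two)
  refine hsq.of_nonneg_of_le (fun j => norm_nonneg _) fun j => ?_
  have hden : ((j : ℂ) + 1) * ((j : ℂ) + 2) = (((j + 1) * (j + 2) : ℕ) : ℂ) := by
    push_cast; ring
  rw [norm_div, norm_pow, hden, Complex.norm_natCast]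
  push_cast
  exact div_le_div₀ zero_le_one (pow_le_one₀ (norm_nonneg z) hz) (by positivity) (by nlinarith)

/-- Center series of the two-cycle sawtooth wave: for `|z| < 1`,
`(z² - 1) · ∑_{j≥1} z^{2j}/(2j) = -z²/2 + (1/2) ∑_{j≥1} z^{2j+2}/(j(j+1))`,
where the right-hand series converges absolutely for all `|z| ≤ 1`. -/
theorem stmt_15 :
    (∀ z : ℂ, ‖z‖ < 1 →
      (z ^ 2 - 1) * ∑' j : ℕ, z ^ (2 * (j + 1)) / (2 * ((j : ℂ) + 1)) =
        -z ^ 2 / 2 + (1 / 2) * ∑' j : ℕ,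
          z ^ (2 * (j + 1) + 2) / (((j : ℂ) + 1) * ((j : ℂ) + 2))) ∧
    (∀ z : ℂ, ‖z‖ ≤ 1 →
      Summable (fun j : ℕ =>
        ‖z ^ (2 * (j + 1) + 2) / (((j : ℂ) + 1) * ((j : ℂ) + 2))‖)) := by
  refine ⟨fun z hz => ?_, fun z hz => summable_norm_pow_div_succ_mul_succ_succ hz _⟩
  set c : ℕ → ℂ := fun j => (2 * ((j : ℂ) + 1))⁻¹
  have hc : ∀ j, ‖c j‖ ≤ 1 := fun j => by
    have : (2 * ((j : ℂ) + 1)) = ((2 * (j + 1) : ℕ) : ℂ) := by push_cast; ring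
    simp only [c, this, norm_inv, Complex.norm_natCast]
    exact inv_le_one_of_one_le₀ (by exact_mod_cast by omega)
  have hz2 : ‖z ^ 2‖ < 1 := by rw [norm_pow]; exact pow_lt_one₀ (norm_nonneg z) hz two_ne_zero
  calc (z ^ 2 - 1) * ∑' j : ℕ, z ^ (2 * (j + 1)) / (2 * ((j : ℂ) + 1))
      = (z ^ 2 - 1) * ∑' j, (z ^ 2) ^ (j + 1) * c j := by simp only [c, pow_mul, div_eq_mul_inv]
    _ = -(z ^ 2 * c 0) + ∑' j, (z ^ 2) ^ (j + 2) * (c j - c (j + 1)) :=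
        mul_sub_one_tsum_pow_succ_mul (summable_pow_succ_mul_of_norm_lt_one hz2 hc)
    _ = _ := by
        rw [← tsum_mul_left]
        congr 1
        · norm_num [c]; ring
        · refine tsum_congr fun j => ?_
          have hj : (j : ℂ) + 2 ≠ 0 := by exact_mod_cast (by omega : j + 2 ≠ 0)
          have hcast : ((j + 1 : ℕ) : ℂ) + 1 = j + 2 := by push_cast; ring
          simp only [c, hcast]
          field_simp
          ring
end

section
/- For every complex number z with |z| < 1, the identity (z² − 1) · ∑_{j=0}^∞ z^{2j+1}/(2j+1)² = −z + ∑_{j=1}^∞ (8j/(4j² − 1)²) z^{2j+1} holds, where the series on the right-hand side converges absolutely for all |z| ≤ 1. -/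
/-!
Write `u j = z^(2j+1)/(2j+1)²`. Then `(z² - 1) ∑ u = -u 0 + ∑ (z² u j - u (j+1))`, and
`z² u j - u (j+1) = (1/(2j+1)² - 1/(2j+3)²) z^(2j+3) = 8(j+1)/(4(j+1)² - 1)² · z^(2j+3)`.
For `‖z‖ ≤ 1` the terms `u j` are dominated by `1/(j+1)²`, which gives absolute convergence of
both `∑ u` and the telescoped series.
-/

theorem sub_one_mul_tsum_eq_neg_add_tsum {R : Type*} [Ring R] [TopologicalSpace R]
    [IsTopologicalRing R] [T2Space R] (a : R) {f : ℕ → R} (hf : Summable f) :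
    (a - 1) * ∑' j, f j = -f 0 + ∑' j, (a * f j - f (j + 1)) := by
  rw [(hf.mul_left a).tsum_sub ((summable_nat_add_iff 1).mpr hf), hf.tsum_mul_left,
    hf.tsum_eq_zero_add]
  noncomm_ring

theorem Summable.norm_mul_sub_shift {R : Type*} [SeminormedRing R] (a : R) {f : ℕ → R}
    (hf : Summable fun j => ‖f j‖) : Summable fun j => ‖a * f j - f (j + 1)‖ :=
  Summable.of_nonneg_of_le (fun _ => norm_nonneg _)
    (fun j => (norm_sub_le _ _).trans (add_le_add_left (norm_mul_le a (f j)) _))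
    ((hf.mul_left ‖a‖).add ((summable_nat_add_iff 1).mpr hf))

theorem summable_norm_pow_odd_div_sq {z : ℂ} (hz : ‖z‖ ≤ 1) :
    Summable fun j : ℕ => ‖z ^ (2 * j + 1) / (2 * (j : ℂ) + 1) ^ 2‖ := by
  have hdom : Summable fun j : ℕ => 1 / ((j : ℝ) + 1) ^ 2 := by
    simpa using (summable_nat_add_iff 1).mpr (Real.summable_one_div_nat_pow.mpr one_lt_two)
  refine Summable.of_nonneg_of_le (fun _ => norm_nonneg _) (fun j => ?_) hdom
  have hodd : ‖2 * (j : ℂ) + 1‖ = 2 * (j : ℝ) + 1 := by exact_mod_cast Complex.norm_natCast (2 * j + 1)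
  rw [norm_div, norm_pow, norm_pow, hodd]
  gcongr
  · exact pow_le_one₀ (norm_nonneg z) hz
  · linarith [(j.cast_nonneg : (0 : ℝ) ≤ j)]

theorem one_div_odd_sq_sub_one_div_odd_sq {K : Type*} [Field K] [CharZero K] (j : ℕ) :
    1 / (2 * (j : K) + 1) ^ 2 - 1 / (2 * ((j : K) + 1) + 1) ^ 2 =
      8 * ((j : K) + 1) / (4 * ((j : K) + 1) ^ 2 - 1) ^ 2 := by
  have h₁ : 2 * (j : K) + 1 ≠ 0 := by exact_mod_cast (2 * j).succ_ne_zero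
  have h₃ : 2 * ((j : K) + 1) + 1 ≠ 0 := by exact_mod_cast (2 * (j + 1)).succ_ne_zero
  rw [show 4 * ((j : K) + 1) ^ 2 - 1 = (2 * (j : K) + 1) * (2 * ((j : K) + 1) + 1) by ring]
  field_simp
  ring

theorem sq_mul_pow_odd_div_sq_sub {K : Type*} [Field K] [CharZero K] (z : K) (j : ℕ) :
    z ^ 2 * (z ^ (2 * j + 1) / (2 * (j : K) + 1) ^ 2) -
        z ^ (2 * (j + 1) + 1) / (2 * ((j + 1 : ℕ) : K) + 1) ^ 2 =
      8 * ((j : K) + 1) / (4 * ((j : K) + 1) ^ 2 - 1) ^ 2 * z ^ (2 * (j + 1) + 1) := by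
  rw [← one_div_odd_sq_sub_one_div_odd_sq, Nat.cast_succ]
  ring

/-- Center series of the triangular wave: for `|z| < 1`,
`(z² - 1) · ∑_{j≥0} z^{2j+1}/(2j+1)² = -z + ∑_{j≥1} (8j/(4j² - 1)²) z^{2j+1}`,
where the right-hand series converges absolutely for all `|z| ≤ 1`. -/
theorem stmt_16 :
    (∀ z : ℂ, ‖z‖ < 1 →
      (z ^ 2 - 1) * ∑' j : ℕ, z ^ (2 * j + 1) / (2 * (j : ℂ) + 1) ^ 2 =
        -z + ∑' j : ℕ,
          (8 * ((j : ℂ) + 1) / (4 * ((j : ℂ) + 1) ^ 2 - 1) ^ 2) * z ^ (2 * (j + 1) + 1)) ∧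
    (∀ z : ℂ, ‖z‖ ≤ 1 →
      Summable (fun j : ℕ =>
        ‖(8 * ((j : ℂ) + 1) / (4 * ((j : ℂ) + 1) ^ 2 - 1) ^ 2) * z ^ (2 * (j + 1) + 1)‖)) := by
  constructor
  · intro z hz
    rw [sub_one_mul_tsum_eq_neg_add_tsum _ (summable_norm_pow_odd_div_sq hz.le).of_norm]
    simp only [sq_mul_pow_odd_div_sq_sub]
    simp
  · intro z hz
    refine ((summable_norm_pow_odd_div_sq hz).norm_mul_sub_shift (z ^ 2)).congr fun j => ?_
    rw [sq_mul_pow_odd_div_sq_sub]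
end

section
/- For every complex number z with |z| < 1, the identity (z² + 1) · ∑_{j=0}^∞ ((−1)^j/(2j+1)) z^{2j+1} = z − ∑_{j=1}^∞ (2(−1)^j/(4j² − 1)) z^{2j+1} holds, where the series on the right-hand side converges absolutely for all |z| ≤ 1. -/
/-!
The left-hand series is the arctangent series, so it converges on the open disc. Multiplying a
series `∑ fⱼ` by `1 + z²` gives `f₀ + ∑ (fⱼ₊₁ + z² fⱼ)`, and for `fⱼ = (-1)ʲ z^(2j+1)/(2j+1)` the
two neighbouring coefficients combine into `(-1)ʲ (1/(2j+1) - 1/(2j+3)) = (-1)ʲ 2/(4(j+1)² - 1)`,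
which is `O(1/j²)`; this gives absolute convergence on the closed disc.
-/

theorem Summable.one_add_mul_tsum {α : Type*} [Ring α] [TopologicalSpace α] [IsTopologicalRing α]
    [T2Space α] {f : ℕ → α} (hf : Summable f) (x : α) :
    (1 + x) * ∑' n, f n = f 0 + ∑' n, (f (n + 1) + x * f n) := by
  rw [add_mul, one_mul, ← hf.tsum_mul_left, hf.tsum_eq_zero_add, add_assoc,
    ((summable_nat_add_iff 1).mpr hf).tsum_add (hf.mul_left x)]

theorem neg_one_pow_div_two_mul_add_one_add_succ {K : Type*} [Field K] [CharZero K] (j : ℕ) :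
    (-1 : K) ^ j / (2 * j + 1) + (-1) ^ (j + 1) / (2 * ((j + 1 : ℕ) : K) + 1) =
      -(2 * (-1) ^ (j + 1) / (4 * ((j : K) + 1) ^ 2 - 1)) := by
  have h₁ : (2 * j + 1 : K) ≠ 0 := by exact_mod_cast (2 * j).succ_ne_zero
  have h₃ : (2 * j + 3 : K) ≠ 0 := by exact_mod_cast (2 * j + 2).succ_ne_zero
  rw [show (4 * ((j : K) + 1) ^ 2 - 1) = (2 * j + 1) * (2 * j + 3) by ring,
    Nat.cast_succ, show 2 * ((j : K) + 1) + 1 = 2 * j + 3 by ring, pow_succ]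
  field_simp
  ring

theorem summable_norm_mul_pow_of_norm_le_one_s17 {𝕜 : Type*} [NormedDivisionRing 𝕜] {b : ℕ → 𝕜}
    (hb : Summable fun j ↦ ‖b j‖) {z : 𝕜} (hz : ‖z‖ ≤ 1) (e : ℕ → ℕ) :
    Summable fun j ↦ ‖b j * z ^ e j‖ :=
  hb.of_nonneg_of_le (fun _ ↦ norm_nonneg _) fun j ↦ by
    rw [norm_mul, norm_pow]
    exact mul_le_of_le_one_right (norm_nonneg _) (pow_le_one₀ (norm_nonneg _) hz)

theorem summable_norm_two_mul_neg_one_pow_div :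
    Summable fun j : ℕ ↦ ‖2 * (-1 : ℂ) ^ (j + 1) / (4 * ((j : ℂ) + 1) ^ 2 - 1)‖ := by
  have hcast (j : ℕ) : 2 * (-1 : ℂ) ^ (j + 1) / (4 * ((j : ℂ) + 1) ^ 2 - 1) =
      (((-1) ^ (j + 1) * (2 / (4 * ((j : ℝ) + 1) ^ 2 - 1)) : ℝ) : ℂ) := by
    push_cast; ring
  have hinv : Summable fun j : ℕ ↦ 2 / ((j : ℝ) + 1) ^ 2 := by
    have := (summable_nat_add_iff 1).mpr (Real.summable_one_div_nat_pow.mpr one_lt_two)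
    simpa [div_eq_mul_inv] using this.mul_left 2
  refine hinv.of_nonneg_of_le (fun _ ↦ norm_nonneg _) fun j ↦ ?_
  have hj : (1 : ℝ) ≤ (j + 1) ^ 2 := one_le_pow₀ (by linarith [j.cast_nonneg (α := ℝ)])
  rw [hcast, Complex.norm_real, norm_mul, norm_pow, norm_neg, norm_one, one_pow, one_mul,
    Real.norm_of_nonneg (div_nonneg zero_le_two (by linarith))]
  gcongr
  linarith

/-- Center series of the shifted (even) square wave: for `|z| < 1`,
`(z² + 1) · ∑_{j≥0} ((-1)^j/(2j+1)) z^{2j+1} = z - ∑_{j≥1} (2(-1)^j/(4j² - 1)) z^{2j+1}`,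
where the right-hand series converges absolutely for all `|z| ≤ 1`. -/
theorem stmt_17 :
    (∀ z : ℂ, ‖z‖ < 1 →
      (z ^ 2 + 1) * ∑' j : ℕ, ((-1 : ℂ) ^ j / (2 * (j : ℂ) + 1)) * z ^ (2 * j + 1) =
        z - ∑' j : ℕ,
          (2 * (-1 : ℂ) ^ (j + 1) / (4 * ((j : ℂ) + 1) ^ 2 - 1)) * z ^ (2 * (j + 1) + 1)) ∧
    (∀ z : ℂ, ‖z‖ ≤ 1 →
      Summable (fun j : ℕ =>
        ‖(2 * (-1 : ℂ) ^ (j + 1) / (4 * ((j : ℂ) + 1) ^ 2 - 1)) * z ^ (2 * (j + 1) + 1)‖)) := by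
  refine ⟨fun z hz ↦ ?_, fun z hz ↦
    summable_norm_mul_pow_of_norm_le_one_s17 summable_norm_two_mul_neg_one_pow_div hz _⟩
  have hf : Summable fun j : ℕ ↦ (-1 : ℂ) ^ j / (2 * j + 1) * z ^ (2 * j + 1) :=
    (Complex.hasSum_arctan hz).summable.congr fun j ↦ by push_cast; ring
  rw [add_comm _ 1, hf.one_add_mul_tsum, sub_eq_add_neg, ← tsum_neg]
  congr 1
  · simp
  · refine tsum_congr fun j ↦ ?_
    rw [neg_mul_eq_neg_mul, ← neg_one_pow_div_two_mul_add_one_add_succ]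
    ring
end

section
/- For every real θ with −π < θ < π, the series ∑_{k=1}^∞ ((−1)^k/(k(k+1))) sin((2k+1)θ/2) converges absolutely and its sum equals sin(θ/2) − θ·cos(θ/2). -/
/-!
With `w = e^{iθ}` the series is `Im (e^{-iθ/2} ∑ₖ cₖ w^{k+2})`, where `cₖ = (-1)^{k+1}/((k+1)(k+2))`.
Splitting `cₖ` into partial fractions and using the Taylor series of `log (1 + z)` gives
`∑ₖ cₖ z^{k+2} = z - (1 + z) log (1 + z)` on the open unit disk. Since `∑ |cₖ| < ∞` the series is
continuous on the closed disk, and the right-hand side is continuous at `w` because `1 + w` lies in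
the slit plane for `|θ| < π`; so the identity persists at `w`. Finally
`1 + w = 2 cos (θ/2) e^{iθ/2}` with `cos (θ/2) > 0`, hence `log (1 + w) = log (2 cos (θ/2)) + iθ/2`,
and taking imaginary parts gives `sin (θ/2) - θ cos (θ/2)`.
-/

open Complex Filter Topology Metric

lemma summable_one_div_add_one_mul_add_two :
    Summable fun k : ℕ => 1 / (((k : ℝ) + 1) * ((k : ℝ) + 2)) := by
  have hsq : Summable fun k : ℕ => 1 / ((k : ℝ) + 1) ^ 2 := by
    simpa using (summable_nat_add_iff 1).mpr (Real.summable_one_div_nat_pow.mpr one_lt_two)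
  refine hsq.of_nonneg_of_le (fun k => by positivity) fun k => ?_
  gcongr
  nlinarith

lemma hasSum_mul_pow_add_of_norm_eq_one {𝕜 : Type*} [RCLike 𝕜] {a : ℕ → 𝕜} (ha : Summable (‖a ·‖)) (m : ℕ)
    {g : 𝕜 → 𝕜} (hg : ∀ z ∈ ball (0 : 𝕜) 1, HasSum (fun n => a n * z ^ (n + m)) (g z))
    {w : 𝕜} (hw : ‖w‖ = 1) (hgw : ContinuousAt g w) :
    HasSum (fun n => a n * w ^ (n + m)) (g w) := by
  have hbound : ∀ n, ∀ z ∈ closedBall (0 : 𝕜) 1, ‖a n * z ^ (n + m)‖ ≤ ‖a n‖ := fun n z hz => by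
    rw [norm_mul, norm_pow]
    exact mul_le_of_le_one_right (norm_nonneg _)
      (pow_le_one₀ (norm_nonneg _) (mem_closedBall_zero_iff.mp hz))
  have hcont : ContinuousOn (fun z => ∑' n, a n * z ^ (n + m)) (closedBall 0 1) :=
    continuousOn_tsum (fun n => by fun_prop) ha hbound
  have hw_mem : w ∈ closedBall (0 : 𝕜) 1 := mem_closedBall_zero_iff.mpr hw.le
  have : (𝓝[ball (0 : 𝕜) 1] w).NeBot := by
    rw [← mem_closure_iff_nhdsWithin_neBot, closure_ball _ one_ne_zero]
    exact hw_mem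
  have hlim_tsum := ((hcont w hw_mem).mono ball_subset_closedBall).tendsto
  have hlim_g : Tendsto (fun z => ∑' n, a n * z ^ (n + m)) (𝓝[ball (0 : 𝕜) 1] w) (𝓝 (g w)) :=
    hgw.continuousWithinAt.tendsto.congr'
      (eventually_nhdsWithin_of_forall fun z hz => (hg z hz).tsum_eq.symm)
  rw [← tendsto_nhds_unique hlim_tsum hlim_g]
  exact (ha.of_norm_bounded fun n => hbound n w hw_mem).hasSum

namespace Complex

lemma hasSum_taylorSeries_sub_one_add_mul_log {z : ℂ} (hz : ‖z‖ < 1) :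
    HasSum (fun k : ℕ => (-1) ^ (k + 1) / (((k : ℂ) + 1) * ((k : ℂ) + 2)) * z ^ (k + 2))
      (z - (1 + z) * log (1 + z)) := by
  have h₁ := (hasSum_nat_add_iff' 1).mpr (hasSum_taylorSeries_log hz)
  have h₂ := (hasSum_nat_add_iff' 2).mpr (hasSum_taylorSeries_log hz)
  have h := (h₁.mul_left (-z)).sub h₂
  rw [show -z * (log (1 + z) - _) - (log (1 + z) - _) = z - (1 + z) * log (1 + z) by
    simp only [Finset.sum_range_succ, Finset.sum_range_zero]; push_cast; ring] at h
  refine h.congr_fun fun k => ?_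
  have hk₁ : (k : ℂ) + 1 ≠ 0 := by norm_cast
  have hk₂ : (k : ℂ) + 2 ≠ 0 := by norm_cast
  push_cast
  field_simp
  ring

lemma one_add_exp_mul_I (x : ℂ) : 1 + exp (x * I) = 2 * cos (x / 2) * exp (x / 2 * I) := by
  rw [two_cos, add_mul, ← exp_add, ← exp_add]
  ring_nf
  simp [add_comm]

lemma exp_neg_half_mul_one_add_exp_mul_I (x : ℂ) :
    exp (-(x / 2) * I) * (1 + exp (x * I)) = 2 * cos (x / 2) := by
  rw [one_add_exp_mul_I, mul_left_comm, ← exp_add]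
  simp

lemma one_add_exp_ofReal_mul_I_mem_slitPlane {θ : ℝ} (h₁ : -Real.pi < θ) (h₂ : θ < Real.pi) :
    1 + exp (θ * I) ∈ slitPlane := by
  have hcos : 0 < Real.cos (θ / 2) := Real.cos_pos_of_mem_Ioo ⟨by linarith, by linarith⟩
  have hsq := Real.cos_sq (θ / 2)
  rw [show 2 * (θ / 2) = θ by ring] at hsq
  refine mem_slitPlane_iff.mpr (Or.inl ?_)
  rw [add_re, one_re, exp_ofReal_mul_I_re]
  nlinarith

lemma log_one_add_exp_ofReal_mul_I {θ : ℝ} (h₁ : -Real.pi < θ) (h₂ : θ < Real.pi) :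
    log (1 + exp (θ * I)) = Real.log (2 * Real.cos (θ / 2)) + θ / 2 * I := by
  have hcos : 0 < Real.cos (θ / 2) := Real.cos_pos_of_mem_Ioo ⟨by linarith, by linarith⟩
  have hreal : 2 * cos (θ / 2) = ((2 * Real.cos (θ / 2) : ℝ) : ℂ) := by push_cast; rfl
  rw [one_add_exp_mul_I, hreal, log_ofReal_mul (by positivity) (exp_ne_zero _), log_exp]
  all_goals simp; linarith

lemma hasSum_taylorSeries_sub_one_add_mul_log_exp_ofReal_mul_I {θ : ℝ}
    (h₁ : -Real.pi < θ) (h₂ : θ < Real.pi) :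
    HasSum (fun k : ℕ => (-1) ^ (k + 1) / (((k : ℂ) + 1) * ((k : ℂ) + 2)) * exp (θ * I) ^ (k + 2))
      (exp (θ * I) - (1 + exp (θ * I)) * log (1 + exp (θ * I))) := by
  refine hasSum_mul_pow_add_of_norm_eq_one ?_ 2
    (fun z hz => hasSum_taylorSeries_sub_one_add_mul_log (mem_ball_zero_iff.mp hz))
    (norm_exp_ofReal_mul_I θ) ?_
  · refine summable_one_div_add_one_mul_add_two.congr fun k => ?_
    rw [norm_div, norm_pow, norm_neg, norm_one, one_pow]
    norm_cast
  · have := continuousAt_clog (one_add_exp_ofReal_mul_I_mem_slitPlane h₁ h₂)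
    fun_prop

lemma im_exp_neg_half_mul_sub_one_add_mul_log {θ : ℝ} (h₁ : -Real.pi < θ) (h₂ : θ < Real.pi) :
    (exp (-(θ / 2 : ℝ) * I) * (exp (θ * I) - (1 + exp (θ * I)) * log (1 + exp (θ * I)))).im =
      Real.sin (θ / 2) - θ * Real.cos (θ / 2) := by
  have hval : exp (-(θ / 2 : ℝ) * I) * (exp (θ * I) - (1 + exp (θ * I)) * log (1 + exp (θ * I))) =
      exp ((θ / 2 : ℝ) * I) - ((2 * Real.cos (θ / 2) : ℝ) : ℂ) * log (1 + exp (θ * I)) := by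
    push_cast
    rw [mul_sub, ← mul_assoc, exp_neg_half_mul_one_add_exp_mul_I, ← exp_add]
    ring_nf
  rw [hval, sub_im, im_ofReal_mul, exp_ofReal_mul_I_im, log_one_add_exp_ofReal_mul_I h₁ h₂]
  simp only [add_im, mul_im, ofReal_re, ofReal_im, I_re, I_im, div_ofNat_re, div_ofNat_im]
  ring

end Complex

/-- For `-π < θ < π`, the series `∑_{k≥1} ((-1)^k/(k(k+1))) sin((2k+1)θ/2)`
converges absolutely and its sum equals `sin(θ/2) - θ cos(θ/2)`. -/
theorem stmt_19 (θ : ℝ) (h₁ : -Real.pi < θ) (h₂ : θ < Real.pi) :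
    Summable (fun k : ℕ =>
      |((-1 : ℝ) ^ (k + 1) / (((k : ℝ) + 1) * ((k : ℝ) + 2))) *
        Real.sin ((2 * ((k : ℝ) + 1) + 1) * θ / 2)|) ∧
    ∑' k : ℕ, ((-1 : ℝ) ^ (k + 1) / (((k : ℝ) + 1) * ((k : ℝ) + 2))) *
        Real.sin ((2 * ((k : ℝ) + 1) + 1) * θ / 2) =
      Real.sin (θ / 2) - θ * Real.cos (θ / 2) := by
  constructor
  · refine summable_one_div_add_one_mul_add_two.of_nonneg_of_le (fun k => abs_nonneg _)
      fun k => ?_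
    rw [abs_mul, abs_div, abs_pow, abs_neg, abs_one, one_pow, abs_of_pos (by positivity)]
    exact mul_le_of_le_one_right (by positivity) (Real.abs_sin_le_one _)
  · have h := hasSum_im ((hasSum_taylorSeries_sub_one_add_mul_log_exp_ofReal_mul_I h₁ h₂).mul_left
      (exp (-(θ / 2 : ℝ) * I)))
    rw [im_exp_neg_half_mul_sub_one_add_mul_log h₁ h₂] at h
    refine (h.congr_fun fun k => ?_).tsum_eq
    have hterm : exp (-(θ / 2 : ℝ) * I) *
          ((-1) ^ (k + 1) / (((k : ℂ) + 1) * ((k : ℂ) + 2)) * exp (θ * I) ^ (k + 2)) =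
        (((-1 : ℝ) ^ (k + 1) / (((k : ℝ) + 1) * ((k : ℝ) + 2)) : ℝ) : ℂ) *
          exp (((2 * ((k : ℝ) + 1) + 1) * θ / 2 : ℝ) * I) := by
      rw [← exp_nat_mul, mul_left_comm, ← exp_add]
      push_cast
      ring_nf
    rw [hterm, im_ofReal_mul, exp_ofReal_mul_I_im]
end
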